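/- arXiv:0711.2373 — 3 statements merged into one kernel-verified Lean document; each statement's English description precedes it below -/
import Mathlib

section
/- Let (Xₜ)_{t∈ℕ} be a submartingale with respect to a filtration (𝓕ₜ), with increments bounded by B₁: |Xₜ - Xₜ₋₁| ≤ B₁ almost surely. Then for all h, b, x > 0, P(inf_{0 ≤ t ≤ h x²} Xₜ < X₀ - b x) ≤ 4 h B₁² / b². -/
/-!
Doob's decomposition writes `X = M + A` with `A` a.s. nondecreasing and `A₀ = 0`, so a drop of `X`
below `X₀ - ε` forces the martingale `Y = M - M₀` below `-ε`. The increments of `Y` are bounded by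
`2B₁`, and since martingale increments are orthogonal, `E[Yₙ²] ≤ 4nB₁²`. Kolmogorov's maximal
inequality, i.e. Doob's maximal inequality for the nonnegative submartingale `Y²`, bounds the
probability by `4nB₁²/ε²`; take `n = ⌊h x²⌋` and `ε = b x`.
-/

open MeasureTheory Finset
open scoped ENNReal

namespace MeasureTheory

variable {Ω : Type*} {m0 : MeasurableSpace Ω} {μ : Measure Ω} {ℱ : Filtration ℕ m0}

theorem memLp_of_bdd_difference [IsFiniteMeasure μ] {E : Type*} [NormedAddCommGroup E]
    {p : ℝ≥0∞} {R : ℝ} {f : ℕ → Ω → E} (hf : ∀ n, AEStronglyMeasurable (f n) μ)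
    (hf₀ : MemLp (f 0) p μ) (hbdd : ∀ᵐ ω ∂μ, ∀ i, ‖f (i + 1) ω - f i ω‖ ≤ R) (n : ℕ) :
    MemLp (f n) p μ := by
  induction n with
  | zero => exact hf₀
  | succ n ih =>
    have hdiff : MemLp (f (n + 1) - f n) p μ :=
      .of_bound ((hf (n + 1)).sub (hf n)) R (by filter_upwards [hbdd] with ω hω using hω n)
    simpa using ih.add hdiff

theorem Submartingale.martingalePart_le {f : ℕ → Ω → ℝ} (hf : Submartingale f ℱ μ) :
    ∀ᵐ ω ∂μ, ∀ n, martingalePart f ℱ μ n ω ≤ f n ω := by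
  filter_upwards [hf.predictablePart_nonneg] with ω hω n
  have hdecomp := congrFun (congrFun (martingalePart_add_predictablePart ℱ μ f) n) ω
  simp only [Pi.add_apply] at hdecomp
  linarith [hω n]

namespace Martingale

variable {M : ℕ → Ω → ℝ}

theorem condExp_sq_sub_ae_eq [SigmaFiniteFiltration μ ℱ] (hM : Martingale M ℱ μ)
    (hL2 : ∀ n, MemLp (M n) 2 μ) (n : ℕ) :
    μ[fun ω => (M (n + 1) ω - M n ω) ^ 2|ℱ n] =ᵐ[μ]
      fun ω => μ[fun ω => M (n + 1) ω ^ 2|ℱ n] ω - M n ω ^ 2 := by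
  have hsq : ∀ k, Integrable (fun ω => M k ω ^ 2) μ := fun k => (hL2 k).integrable_sq
  have hcross : Integrable (M n * M (n + 1)) μ := (hL2 n).integrable_mul (hL2 (n + 1))
  have hexpand : (fun ω => (M (n + 1) ω - M n ω) ^ 2) =
      (fun ω => M (n + 1) ω ^ 2) - ((2 : ℝ) • (M n * M (n + 1)) - fun ω => M n ω ^ 2) := by
    ext ω; simp only [Pi.sub_apply, Pi.smul_apply, Pi.mul_apply, smul_eq_mul]; ring
  have hpull : μ[M n * M (n + 1)|ℱ n] =ᵐ[μ] fun ω => M n ω ^ 2 := by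
    filter_upwards [condExp_mul_of_stronglyMeasurable_left (hM.stronglyMeasurable n) hcross
      (hM.integrable (n + 1)), hM.condExp_ae_eq n.le_succ] with ω h1 h2
    rw [h1, Pi.mul_apply, h2, sq]
  have hlast : μ[fun ω => M n ω ^ 2|ℱ n] = fun ω => M n ω ^ 2 :=
    condExp_of_stronglyMeasurable (ℱ.le n) ((hM.stronglyMeasurable n).pow 2) (hsq n)
  rw [hexpand]
  filter_upwards [condExp_sub (hsq (n + 1)) ((hcross.smul (2 : ℝ)).sub (hsq n)) (ℱ n),
    condExp_sub (hcross.smul (2 : ℝ)) (hsq n) (ℱ n), condExp_smul (2 : ℝ) (M n * M (n + 1)) (ℱ n),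
    hpull] with ω h1 h2 h3 h4
  simp only [h1, Pi.sub_apply, h2, h3, Pi.smul_apply, h4, hlast, smul_eq_mul]
  ring

theorem submartingale_sq [IsFiniteMeasure μ] (hM : Martingale M ℱ μ)
    (hL2 : ∀ n, MemLp (M n) 2 μ) : Submartingale (fun n ω => M n ω ^ 2) ℱ μ := by
  refine submartingale_nat (fun n => (hM.stronglyMeasurable n).pow 2)
    (fun n => (hL2 n).integrable_sq) fun n => ?_
  filter_upwards [hM.condExp_sq_sub_ae_eq hL2 n,
    condExp_nonneg (m := ℱ n) (f := fun ω => (M (n + 1) ω - M n ω) ^ 2) (μ := μ)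
      (.of_forall fun ω => sq_nonneg _)] with ω h1 h2
  simp only [h1, Pi.zero_apply, sub_nonneg] at h2
  exact h2

theorem integral_sq_add_one [IsFiniteMeasure μ] (hM : Martingale M ℱ μ)
    (hL2 : ∀ n, MemLp (M n) 2 μ) (n : ℕ) :
    ∫ ω, M (n + 1) ω ^ 2 ∂μ = ∫ ω, M n ω ^ 2 ∂μ + ∫ ω, (M (n + 1) ω - M n ω) ^ 2 ∂μ := by
  rw [← integral_condExp (ℱ.le n) (f := fun ω => (M (n + 1) ω - M n ω) ^ 2),
    integral_congr_ae (hM.condExp_sq_sub_ae_eq hL2 n),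
    integral_sub integrable_condExp (hL2 n).integrable_sq, integral_condExp (ℱ.le n)]
  ring

theorem integral_sq_le_of_bdd_difference [IsProbabilityMeasure μ] (hM : Martingale M ℱ μ)
    (hM₀ : MemLp (M 0) 2 μ) {R : ℝ} (hbdd : ∀ᵐ ω ∂μ, ∀ i, ‖M (i + 1) ω - M i ω‖ ≤ R) (n : ℕ) :
    ∫ ω, M n ω ^ 2 ∂μ ≤ ∫ ω, M 0 ω ^ 2 ∂μ + n * R ^ 2 := by
  have hL2 : ∀ n, MemLp (M n) 2 μ := memLp_of_bdd_difference
    (fun n => (hM.stronglyMeasurable n).mono (ℱ.le n) |>.aestronglyMeasurable) hM₀ hbdd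
  induction n with
  | zero => simp
  | succ n ih =>
    have hstep : ∫ ω, (M (n + 1) ω - M n ω) ^ 2 ∂μ ≤ R ^ 2 := by
      refine (integral_mono_ae ((hL2 (n + 1)).sub (hL2 n)).integrable_sq
        (integrable_const (R ^ 2)) ?_).trans_eq (by simp)
      filter_upwards [hbdd] with ω hω
      exact sq_le_sq' (abs_le.1 (hω n)).1 (abs_le.1 (hω n)).2
    rw [hM.integral_sq_add_one hL2 n]
    push_cast
    linarith

theorem kolmogorov_maximal_ineq [IsFiniteMeasure μ] (hM : Martingale M ℱ μ)
    (hL2 : ∀ n, MemLp (M n) 2 μ) {ε : ℝ} (hε : 0 < ε) (n : ℕ) :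
    μ {ω | ∃ k ≤ n, ε ≤ |M k ω|} ≤ ENNReal.ofReal ((∫ ω, M n ω ^ 2 ∂μ) / ε ^ 2) := by
  set S := {ω | ((ε ^ 2).toNNReal : ℝ) ≤
    (range (n + 1)).sup' nonempty_range_add_one fun k => M k ω ^ 2}
  have hsub : {ω | ∃ k ≤ n, ε ≤ |M k ω|} ⊆ S := by
    rintro ω ⟨k, hk, hεk⟩
    rw [Set.mem_ofPred_eq, Real.coe_toNNReal _ (sq_nonneg ε)]
    refine le_trans ?_ (le_sup' (fun k => M k ω ^ 2) (mem_range.2 (Nat.lt_succ_of_le hk)))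
    exact sq_le_sq.2 (by rwa [abs_of_pos hε])
  have hmax : ENNReal.ofReal (ε ^ 2) * μ S ≤ ENNReal.ofReal (∫ ω, M n ω ^ 2 ∂μ) :=
    (maximal_ineq (hM.submartingale_sq hL2) (fun n ω => sq_nonneg (M n ω)) n).trans
      (ENNReal.ofReal_le_ofReal (setIntegral_le_integral (hL2 n).integrable_sq
        (.of_forall fun ω => sq_nonneg _)))
  rw [ENNReal.ofReal_div_of_pos (by positivity)]
  refine (measure_mono hsub).trans ?_
  rw [ENNReal.le_div_iff_mul_le (by simp [hε.ne']) (by simp), mul_comm]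
  exact hmax

end Martingale

theorem Submartingale.measure_exists_lt_sub_le [IsProbabilityMeasure μ] {X : ℕ → Ω → ℝ}
    (hX : Submartingale X ℱ μ) {R : ℝ} (hbdd : ∀ᵐ ω ∂μ, ∀ i, ‖X (i + 1) ω - X i ω‖ ≤ R)
    {ε : ℝ} (hε : 0 < ε) (n : ℕ) :
    μ {ω | ∃ t ≤ n, X t ω < X 0 ω - ε} ≤ ENNReal.ofReal (n * (2 * R) ^ 2 / ε ^ 2) := by
  set Y : ℕ → Ω → ℝ := fun n => martingalePart X ℱ μ n - X 0
  have hY : Martingale Y ℱ μ := (martingale_martingalePart hX.stronglyAdapted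
    hX.integrable).sub (martingale_const_fun ℱ μ (hX.stronglyMeasurable 0) (hX.integrable 0))
  have hY₀ : Y 0 = 0 := by simp [Y, martingalePart_zero]
  have hYbdd : ∀ᵐ ω ∂μ, ∀ i, ‖Y (i + 1) ω - Y i ω‖ ≤ 2 * R := by
    simpa [Y] using martingalePart_bdd_difference ℱ hbdd
  have hL2 : ∀ n, MemLp (Y n) 2 μ := memLp_of_bdd_difference
    (fun n => (hY.stronglyMeasurable n).mono (ℱ.le n) |>.aestronglyMeasurable)
    (by rw [hY₀]; exact .zero) hYbdd
  have hevent : {ω | ∃ t ≤ n, X t ω < X 0 ω - ε} ≤ᵐ[μ] {ω | ∃ t ≤ n, ε ≤ |Y t ω|} := by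
    filter_upwards [hX.martingalePart_le] with ω hω ⟨t, ht, hXt⟩
    refine ⟨t, ht, ?_⟩
    have hYt : Y t ω < -ε := by
      simp only [Y, Pi.sub_apply]
      linarith [hω t]
    linarith [neg_le_abs (Y t ω)]
  have hvar : ∫ ω, Y n ω ^ 2 ∂μ ≤ n * (2 * R) ^ 2 := by
    simpa [hY₀] using hY.integral_sq_le_of_bdd_difference (hL2 0) hYbdd n
  calc μ {ω | ∃ t ≤ n, X t ω < X 0 ω - ε}
      ≤ μ {ω | ∃ t ≤ n, ε ≤ |Y t ω|} := measure_mono_ae hevent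
    _ ≤ ENNReal.ofReal ((∫ ω, Y n ω ^ 2 ∂μ) / ε ^ 2) := hY.kolmogorov_maximal_ineq hL2 hε n
    _ ≤ ENNReal.ofReal (n * (2 * R) ^ 2 / ε ^ 2) := by gcongr

end MeasureTheory

theorem stmt_6_general {Ω : Type*} {m0 : MeasurableSpace Ω} (μ : Measure Ω) [IsProbabilityMeasure μ]
    (ℱ : Filtration ℕ m0) (X : ℕ → Ω → ℝ) (B₁ : ℝ)
    (hsub : Submartingale X ℱ μ)
    (hbd : ∀ t : ℕ, ∀ᵐ ω ∂μ, |X (t + 1) ω - X t ω| ≤ B₁) :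
    ∀ h b x : ℝ, 0 < h → 0 < b → 0 < x →
      μ {ω | ∃ t : ℕ, (t : ℝ) ≤ h * x ^ 2 ∧ X t ω < X 0 ω - b * x} ≤
        ENNReal.ofReal (4 * h * B₁ ^ 2 / b ^ 2) := by
  intro h b x hh hb hx
  have hbdd : ∀ᵐ ω ∂μ, ∀ i, ‖X (i + 1) ω - X i ω‖ ≤ B₁ := ae_all_iff.2 hbd
  have hn : (⌊h * x ^ 2⌋₊ : ℝ) ≤ h * x ^ 2 := Nat.floor_le (by positivity)
  calc μ {ω | ∃ t : ℕ, (t : ℝ) ≤ h * x ^ 2 ∧ X t ω < X 0 ω - b * x}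
      ≤ μ {ω | ∃ t ≤ ⌊h * x ^ 2⌋₊, X t ω < X 0 ω - b * x} :=
        measure_mono fun ω ⟨t, ht, hXt⟩ => ⟨t, Nat.le_floor ht, hXt⟩
    _ ≤ ENNReal.ofReal (⌊h * x ^ 2⌋₊ * (2 * B₁) ^ 2 / (b * x) ^ 2) :=
        hsub.measure_exists_lt_sub_le hbdd (by positivity) _
    _ ≤ ENNReal.ofReal (4 * h * B₁ ^ 2 / b ^ 2) := by
        refine ENNReal.ofReal_le_ofReal ?_
        calc (⌊h * x ^ 2⌋₊ * (2 * B₁) ^ 2 / (b * x) ^ 2 : ℝ)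
            ≤ h * x ^ 2 * (2 * B₁) ^ 2 / (b * x) ^ 2 := by gcongr
          _ = 4 * h * B₁ ^ 2 / b ^ 2 := by field_simp; ring

/-- If `(Xₜ)` is a submartingale with increments bounded by `B₁`, then for all `h, b, x > 0`,
`P(inf_{0 ≤ t ≤ h x²} Xₜ < X₀ - b x) ≤ 4 h B₁² / b²`. -/
theorem stmt_6 {Ω : Type*} {m0 : MeasurableSpace Ω} (μ : Measure Ω) [IsProbabilityMeasure μ]
    (ℱ : Filtration ℕ m0) (X : ℕ → Ω → ℝ) (B₁ : ℝ) (hB₁ : 0 < B₁)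
    (hsub : Submartingale X ℱ μ)
    (hbd : ∀ t : ℕ, ∀ᵐ ω ∂μ, |X (t + 1) ω - X t ω| ≤ B₁) :
    ∀ h b x : ℝ, 0 < h → 0 < b → 0 < x →
      μ {ω | ∃ t : ℕ, (t : ℝ) ≤ h * x ^ 2 ∧ X t ω < X 0 ω - b * x} ≤
        ENNReal.ofReal (4 * h * B₁ ^ 2 / b ^ 2) :=
  stmt_6_general μ ℱ X B₁ hsub hbd
end

section
/- Let (Xₜ) be a Markov process on [0,∞) with jumps Dₜ = Xₜ - Xₜ₋₁ satisfying |Dₜ| ≤ B₁ and E[Dₜ² | 𝓕ₜ₋₁] ≥ B₂ > 0 whenever Xₜ₋₁ ≥ a. Fix c > 0, γ ∈ (0,1), and n large. Suppose X₀ ∈ (a, γn] and E[Dₜ | 𝓕ₜ₋₁] ≤ c/n on the event {a ≤ Xₜ₋₁ ≤ n}. Let τ = inf{t : Xₜ < a or Xₜ > n}. Then τ < ∞ almost surely and P(X_τ < a) ≥ ν for some ν = ν(γ, c, B₂) > 0 not depending on n. -/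
/-!
Put `θ = 8c / (B₂ n)` and let `τ` be the exit time of `X` from `[a, n]`. By
`1 - x + x² / 4 ≤ exp (-x)` for `x ≤ 2` and the bounds on the conditional mean and second moment
of the jumps, the process `exp (-θ X_{t ∧ τ})` has expected increment at least
`(θ² B₂ / 4 - θ c / n) · exp (-θ n) · P(τ > t) = 8c² / (B₂ n²) · exp (-θ n) · P(τ > t)`.
Since it is bounded by `1`, these increments are summable and `P(τ > t) → 0`. Its expectation is
at least `exp (-θ γ n)` at time `0` and at most `P(X_τ < a) + exp (-θ n) + P(τ > t)` at time `t`;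
letting `t → ∞` gives `P(X_τ < a) ≥ exp (-8cγ / B₂) - exp (-8c / B₂)`.
-/

open MeasureTheory Filter Topology Set

lemma Real.one_sub_add_sq_div_four_le_exp_neg {x : ℝ} (hx : x ≤ 2) :
    1 - x + x ^ 2 / 4 ≤ Real.exp (-x) := by
  have h := Real.add_one_le_exp (-x / 2)
  have hsq : Real.exp (-x / 2) ^ 2 = Real.exp (-x) := by
    rw [← Real.exp_nat_mul]; ring_nf
  nlinarith

lemma tendsto_atTop_zero_of_mul_le_sub {z p : ℕ → ℝ} {ε C : ℝ} (hε : 0 < ε)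
    (hp : ∀ t, 0 ≤ p t) (hz : ∀ t, ε * p t ≤ z (t + 1) - z t) (hC : ∀ t, z t ≤ C) :
    Tendsto p atTop (𝓝 0) := by
  refine (summable_of_sum_range_le (c := (C - z 0) / ε) hp fun t => ?_).tendsto_atTop_zero
  rw [le_div_iff₀ hε, Finset.sum_mul]
  calc ∑ s ∈ Finset.range t, p s * ε ≤ ∑ s ∈ Finset.range t, (z (s + 1) - z s) :=
        Finset.sum_le_sum fun s _ => by rw [mul_comm]; exact hz s
    _ = z t - z 0 := Finset.sum_range_sub z t
    _ ≤ C - z 0 := by linarith [hC t]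

section CondExp

variable {Ω : Type*} {m m0 : MeasurableSpace Ω} {μ : Measure Ω} [IsFiniteMeasure μ]
  {f g : Ω → ℝ} {C : ℝ}

lemma integral_mul_condExp (hm : m ≤ m0) (hg : StronglyMeasurable[m] g)
    (hg_bdd : ∀ᵐ ω ∂μ, ‖g ω‖ ≤ C) (hf : Integrable f μ) :
    ∫ ω, g ω * μ[f|m] ω ∂μ = ∫ ω, g ω * f ω ∂μ :=
  calc ∫ ω, g ω * μ[f|m] ω ∂μ = ∫ ω, μ[g * f|m] ω ∂μ :=
        integral_congr_ae (condExp_stronglyMeasurable_mul_of_bound hm hg hf C hg_bdd).symm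
    _ = ∫ ω, g ω * f ω ∂μ := integral_condExp hm

lemma integral_mul_le_of_condExp_le (hm : m ≤ m0) (hg : StronglyMeasurable[m] g) (hg0 : 0 ≤ g)
    (hg_bdd : ∀ᵐ ω ∂μ, g ω ≤ C) (hf : Integrable f μ) {δ : ℝ}
    (hfδ : ∀ᵐ ω ∂μ, 0 < g ω → μ[f|m] ω ≤ δ) :
    ∫ ω, g ω * f ω ∂μ ≤ δ * ∫ ω, g ω ∂μ := by
  have hg_norm : ∀ᵐ ω ∂μ, ‖g ω‖ ≤ C := by
    filter_upwards [hg_bdd] with ω h using by rwa [Real.norm_of_nonneg (hg0 ω)]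
  have hg_int : Integrable g μ := .of_bound (hg.mono hm).aestronglyMeasurable C hg_norm
  rw [← integral_mul_condExp hm hg hg_norm hf, ← integral_const_mul]
  refine integral_mono_ae (integrable_condExp.bdd_mul (hg.mono hm).aestronglyMeasurable hg_norm)
    (hg_int.const_mul δ) ?_
  filter_upwards [hfδ] with ω h
  rcases (hg0 ω).eq_or_lt with h0 | hpos
  · simp [← h0]
  · rw [mul_comm δ]
    exact mul_le_mul_of_nonneg_left (h hpos) (hg0 ω)

lemma le_integral_mul_of_le_condExp (hm : m ≤ m0) (hg : StronglyMeasurable[m] g) (hg0 : 0 ≤ g)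
    (hg_bdd : ∀ᵐ ω ∂μ, g ω ≤ C) (hf : Integrable f μ) {v : ℝ}
    (hfv : ∀ᵐ ω ∂μ, 0 < g ω → v ≤ μ[f|m] ω) :
    v * ∫ ω, g ω ∂μ ≤ ∫ ω, g ω * f ω ∂μ := by
  have h := integral_mul_le_of_condExp_le hm hg hg0 hg_bdd hf.neg (δ := -v) <| by
    filter_upwards [hfv, condExp_neg f m] with ω hω hneg hpos
    rw [hneg, Pi.neg_apply, neg_le_neg_iff]
    exact hω hpos
  simp only [Pi.neg_apply, mul_neg, integral_neg, neg_mul, neg_le_neg_iff] at h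
  exact h

lemma mul_integral_le_integral_mul_exp_neg_sub_one (hm : m ≤ m0) (hg : StronglyMeasurable[m] g)
    (hg0 : 0 ≤ g) (hg_bdd : ∀ᵐ ω ∂μ, g ω ≤ C) {D : Ω → ℝ} (hD : AEStronglyMeasurable D μ)
    {B θ δ v : ℝ} (hDB : ∀ᵐ ω ∂μ, |D ω| ≤ B) (hθ : 0 ≤ θ) (hθB : θ * B ≤ 2)
    (hdrift : ∀ᵐ ω ∂μ, 0 < g ω → μ[D|m] ω ≤ δ)
    (hvar : ∀ᵐ ω ∂μ, 0 < g ω → v ≤ μ[fun ω => D ω ^ 2|m] ω) :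
    (θ ^ 2 / 4 * v - θ * δ) * ∫ ω, g ω ∂μ ≤
      ∫ ω, g ω * (Real.exp (-(θ * D ω)) - 1) ∂μ := by
  have hg_norm : ∀ᵐ ω ∂μ, ‖g ω‖ ≤ C := by
    filter_upwards [hg_bdd] with ω h using by rwa [Real.norm_of_nonneg (hg0 ω)]
  have hgm : AEStronglyMeasurable g μ := (hg.mono hm).aestronglyMeasurable
  have hθD : ∀ᵐ ω ∂μ, |θ * D ω| ≤ 2 := by
    filter_upwards [hDB] with ω h
    rw [abs_mul, abs_of_nonneg hθ]
    exact (mul_le_mul_of_nonneg_left h hθ).trans hθB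
  have hD_int : Integrable D μ := .of_bound hD B (by simpa only [Real.norm_eq_abs] using hDB)
  have hD2_int : Integrable (fun ω => D ω ^ 2) μ := by
    refine .of_bound (hD.pow 2) (B ^ 2) ?_
    filter_upwards [hDB] with ω h
    rw [Real.norm_eq_abs, abs_pow]
    exact pow_le_pow_left₀ (abs_nonneg _) h 2
  have hexp_int : Integrable (fun ω => Real.exp (-(θ * D ω)) - 1) μ := by
    refine .of_bound ((Real.continuous_exp.comp_aestronglyMeasurable
      (hD.const_mul θ).neg).sub aestronglyMeasurable_const) (Real.exp 2 + 1) ?_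
    filter_upwards [hθD] with ω h
    have := Real.exp_le_exp.2 (neg_le.2 (neg_le_of_abs_le h))
    rw [Real.norm_eq_abs, abs_le]
    constructor <;> linarith [Real.exp_pos (-(θ * D ω))]
  have hgD := hD_int.bdd_mul hgm hg_norm
  have hgD2 := hD2_int.bdd_mul hgm hg_norm
  have hvar_int := le_integral_mul_of_le_condExp hm hg hg0 hg_bdd hD2_int hvar
  have hdrift_int := integral_mul_le_of_condExp_le hm hg hg0 hg_bdd hD_int hdrift
  calc (θ ^ 2 / 4 * v - θ * δ) * ∫ ω, g ω ∂μ
      = θ ^ 2 / 4 * (v * ∫ ω, g ω ∂μ) - θ * (δ * ∫ ω, g ω ∂μ) := by ring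
    _ ≤ θ ^ 2 / 4 * ∫ ω, g ω * D ω ^ 2 ∂μ - θ * ∫ ω, g ω * D ω ∂μ :=
      sub_le_sub (mul_le_mul_of_nonneg_left hvar_int (by positivity))
        (mul_le_mul_of_nonneg_left hdrift_int hθ)
    _ = ∫ ω, θ ^ 2 / 4 * (g ω * D ω ^ 2) - θ * (g ω * D ω) ∂μ := by
      rw [integral_sub (hgD2.const_mul _) (hgD.const_mul _), integral_const_mul,
        integral_const_mul]
    _ ≤ ∫ ω, g ω * (Real.exp (-(θ * D ω)) - 1) ∂μ := by
      refine integral_mono_ae ((hgD2.const_mul _).sub (hgD.const_mul _))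
        (hexp_int.bdd_mul hgm hg_norm) ?_
      filter_upwards [hθD] with ω h
      have hquad := Real.one_sub_add_sq_div_four_le_exp_neg (le_of_abs_le h)
      calc θ ^ 2 / 4 * (g ω * D ω ^ 2) - θ * (g ω * D ω)
          = g ω * (1 - θ * D ω + (θ * D ω) ^ 2 / 4 - 1) := by ring
        _ ≤ g ω * (Real.exp (-(θ * D ω)) - 1) := by gcongr; exact hg0 ω

end CondExp

lemma MeasureTheory.stoppedProcess_add_one {Ω β : Type*} [AddCommGroup β] (u : ℕ → Ω → β)
    (τ : Ω → WithTop ℕ) (t : ℕ) :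
    stoppedProcess u τ (t + 1) =
      stoppedProcess u τ t + {ω | (t : WithTop ℕ) < τ ω}.indicator (u (t + 1) - u t) := by
  ext ω
  by_cases h : (t : WithTop ℕ) < τ ω
  · have h' : ((t + 1 : ℕ) : WithTop ℕ) ≤ τ ω := Order.add_one_le_of_lt (α := ℕ∞) h
    rw [Pi.add_apply, indicator_of_mem (show ω ∈ {ω | (t : WithTop ℕ) < τ ω} from h),
      stoppedProcess_eq_of_le (i := t + 1) h', stoppedProcess_eq_of_le (i := t) h.le,
      Pi.sub_apply, add_sub_cancel]
  · have h' : τ ω ≤ t := not_lt.1 h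
    have h'' : τ ω ≤ ((t + 1 : ℕ) : WithTop ℕ) := h'.trans (WithTop.coe_le_coe.2 t.le_succ)
    rw [Pi.add_apply, indicator_of_notMem (show ω ∉ {ω | (t : WithTop ℕ) < τ ω} from h),
      add_zero, stoppedProcess_eq_of_ge (i := t) h', stoppedProcess_eq_of_ge (i := t + 1) h'']

section ExitTime

variable {Ω : Type*} {m0 : MeasurableSpace Ω} {X : ℕ → Ω → ℝ} {a b : ℝ} {ω : Ω} {t : ℕ}

-- `⊤` on paths that never leave `[a, b]`, where the `sInf` over `ℕ` in the statement is `0`.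
noncomputable def exitTime (X : ℕ → Ω → ℝ) (a b : ℝ) : Ω → WithTop ℕ :=
  hittingAfter X (Iio a ∪ Ioi b) 0

def exitBelow (X : ℕ → Ω → ℝ) (a b : ℝ) : Set Ω :=
  {ω | ∃ t : ℕ, exitTime X a b ω = t ∧ X t ω < a}

lemma lt_exitTime_iff : (t : WithTop ℕ) < exitTime X a b ω ↔ ∀ s ≤ t, X s ω ∈ Icc a b := by
  refine (not_le.symm.trans (not_congr hittingAfter_le_iff)).trans ?_
  simp only [not_exists, not_and, mem_Icc, zero_le, true_and, mem_union, mem_Iio, mem_Ioi, not_or,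
    not_lt, Nat.cast_id]

lemma exit_of_exitTime_eq (h : exitTime X a b ω = t) : X t ω < a ∨ b < X t ω := by
  have hmem : X (exitTime X a b ω).untopA ω ∈ Iio a ∪ Ioi b :=
    hittingAfter_mem_set_of_ne_top (by rw [exitTime] at h; rw [h]; exact WithTop.coe_ne_top)
  rw [h] at hmem
  exact hmem

lemma sInf_exit_eq_of_exitTime_eq (h : exitTime X a b ω = t) :
    sInf {s | X s ω < a ∨ b < X s ω} = t := by
  unfold exitTime hittingAfter at h
  split_ifs at h
  · simpa using h
  · exact absurd h WithTop.top_ne_coe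

lemma MeasureTheory.Adapted.isStoppingTime_exitTime {ℱ : Filtration ℕ m0} (hX : Adapted ℱ X) :
    IsStoppingTime ℱ (exitTime X a b) :=
  hX.isStoppingTime_hittingAfter (measurableSet_Iio.union measurableSet_Ioi)

lemma MeasureTheory.Adapted.measurableSet_exitBelow {ℱ : Filtration ℕ m0} (hX : Adapted ℱ X) :
    MeasurableSet (exitBelow X a b) := by
  have : exitBelow X a b = ⋃ t : ℕ, {ω | exitTime X a b ω = t} ∩ X t ⁻¹' Iio a := by
    ext ω; simp [exitBelow]
  rw [this]
  exact .iUnion fun t => (ℱ.le t _ (hX.isStoppingTime_exitTime.measurableSet_eq t)).inter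
    (hX.measurable measurableSet_Iio)

end ExitTime

section StoppedExp

variable {Ω : Type*} {m0 : MeasurableSpace Ω} {μ : Measure Ω} {ℱ : Filtration ℕ m0}
  {X : ℕ → Ω → ℝ} {a b θ : ℝ}

lemma stoppedProcess_exp_le_indicator (hX0 : ∀ t ω, 0 ≤ X t ω) (hθ : 0 ≤ θ) (t : ℕ) (ω : Ω) :
    stoppedProcess (fun t ω => Real.exp (-(θ * X t ω))) (exitTime X a b) t ω ≤
      (exitBelow X a b).indicator 1 ω + Real.exp (-(θ * b)) +
        {ω | (t : WithTop ℕ) < exitTime X a b ω}.indicator 1 ω := by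
  have hle_one : ∀ s, Real.exp (-(θ * X s ω)) ≤ 1 := fun s =>
    Real.exp_le_one_iff.2 (neg_nonpos.2 (mul_nonneg hθ (hX0 s ω)))
  have hbelow : 0 ≤ (exitBelow X a b).indicator (1 : Ω → ℝ) ω :=
    indicator_nonneg (fun _ _ => zero_le_one) ω
  have hexp := Real.exp_pos (-(θ * b))
  by_cases h : (t : WithTop ℕ) < exitTime X a b ω
  · rw [indicator_of_mem (show ω ∈ {ω | (t : WithTop ℕ) < exitTime X a b ω} from h), Pi.one_apply]
    have : stoppedProcess (fun t ω => Real.exp (-(θ * X t ω))) (exitTime X a b) t ω ≤ 1 :=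
      hle_one _
    linarith
  obtain ⟨k, hk⟩ : ∃ k : ℕ, exitTime X a b ω = k :=
    WithTop.ne_top_iff_exists.1 (ne_top_of_le_ne_top (WithTop.coe_ne_top) (not_lt.1 h)) |>.imp
      fun _ h => h.symm
  rw [stoppedProcess_eq_of_ge (i := t) (not_lt.1 h), hk,
    indicator_of_notMem (show ω ∉ {ω | (t : WithTop ℕ) < exitTime X a b ω} from h)]
  change Real.exp (-(θ * X k ω)) ≤ _
  rcases exit_of_exitTime_eq hk with hlow | hhigh
  · rw [indicator_of_mem (show ω ∈ exitBelow X a b from ⟨k, hk, hlow⟩), Pi.one_apply]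
    linarith [hle_one k]
  · have : Real.exp (-(θ * X k ω)) ≤ Real.exp (-(θ * b)) :=
      Real.exp_le_exp.2 (neg_le_neg (mul_le_mul_of_nonneg_left hhigh.le hθ))
    linarith

lemma MeasureTheory.Adapted.integrable_stoppedProcess_exp [IsFiniteMeasure μ] (hX : Adapted ℱ X)
    (hX0 : ∀ t ω, 0 ≤ X t ω) (hθ : 0 ≤ θ) (t : ℕ) :
    Integrable (stoppedProcess (fun t ω => Real.exp (-(θ * X t ω))) (exitTime X a b) t) μ := by
  have hS : Adapted ℱ fun t ω => Real.exp (-(θ * X t ω)) := fun t =>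
    ((hX t).const_mul θ).neg.exp
  refine .of_bound (hS.stronglyAdapted.stronglyMeasurable_stoppedProcess_of_discrete
    hX.isStoppingTime_exitTime t).aestronglyMeasurable 1 (ae_of_all _ fun ω => ?_)
  change ‖Real.exp _‖ ≤ 1
  rw [Real.norm_of_nonneg (Real.exp_pos _).le]
  exact Real.exp_le_one_iff.2 (neg_nonpos.2 (mul_nonneg hθ (hX0 _ ω)))

lemma MeasureTheory.Adapted.le_integral_stoppedProcess_exp_succ_sub [IsFiniteMeasure μ]
    (hX : Adapted ℱ X) (hX0 : ∀ t ω, 0 ≤ X t ω) {B δ v : ℝ} (hθ : 0 ≤ θ) (hθB : θ * B ≤ 2)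
    (t : ℕ) (hjump : ∀ᵐ ω ∂μ, |X (t + 1) ω - X t ω| ≤ B)
    (hvar : ∀ᵐ ω ∂μ, a ≤ X t ω → v ≤ μ[fun ω' => (X (t + 1) ω' - X t ω') ^ 2|ℱ t] ω)
    (hdrift : ∀ᵐ ω ∂μ, a ≤ X t ω ∧ X t ω ≤ b → μ[fun ω' => X (t + 1) ω' - X t ω'|ℱ t] ω ≤ δ)
    (hκ : 0 ≤ θ ^ 2 / 4 * v - θ * δ) :
    (θ ^ 2 / 4 * v - θ * δ) * Real.exp (-(θ * b)) *
        μ.real {ω | (t : WithTop ℕ) < exitTime X a b ω} ≤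
      ∫ ω, stoppedProcess (fun t ω => Real.exp (-(θ * X t ω))) (exitTime X a b) (t + 1) ω ∂μ -
        ∫ ω, stoppedProcess (fun t ω => Real.exp (-(θ * X t ω))) (exitTime X a b) t ω ∂μ := by
  set A := {ω | (t : WithTop ℕ) < exitTime X a b ω}
  have hA : MeasurableSet[ℱ t] A := hX.isStoppingTime_exitTime.measurableSet_gt t
  have hAX : ∀ ω ∈ A, X t ω ∈ Icc a b := fun ω h => lt_exitTime_iff.1 h t le_rfl
  set g := A.indicator fun ω => Real.exp (-(θ * X t ω)) with hg_def
  have hg : StronglyMeasurable[ℱ t] g :=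
    (((hX t).const_mul θ).neg.exp.indicator hA).stronglyMeasurable
  have hg0 : 0 ≤ g := fun ω => indicator_nonneg (fun _ _ => (Real.exp_pos _).le) ω
  have hg1 : ∀ᵐ ω ∂μ, g ω ≤ 1 := ae_of_all _ fun ω =>
    indicator_apply_le' (fun _ => Real.exp_le_one_iff.2 (neg_nonpos.2 (mul_nonneg hθ (hX0 t ω))))
      fun _ => zero_le_one
  have hg_pos : ∀ ω, 0 < g ω → X t ω ∈ Icc a b := fun ω h =>
    hAX ω (by by_contra hω; simp [g, indicator_of_notMem hω] at h)
  have hincrement : ∀ ω, stoppedProcess (fun t ω => Real.exp (-(θ * X t ω))) (exitTime X a b)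
      (t + 1) ω - stoppedProcess (fun t ω => Real.exp (-(θ * X t ω))) (exitTime X a b) t ω =
      g ω * (Real.exp (-(θ * (X (t + 1) ω - X t ω))) - 1) := fun ω => by
    rw [stoppedProcess_add_one, Pi.add_apply, add_sub_cancel_left]
    by_cases hω : ω ∈ A
    · rw [indicator_of_mem hω, hg_def, indicator_of_mem hω, Pi.sub_apply, mul_sub, mul_one,
        ← Real.exp_add]
      ring_nf
    · rw [indicator_of_notMem hω, hg_def, indicator_of_notMem hω, zero_mul]
  calc (θ ^ 2 / 4 * v - θ * δ) * Real.exp (-(θ * b)) * μ.real A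
      = (θ ^ 2 / 4 * v - θ * δ) * ∫ ω, A.indicator (fun _ => Real.exp (-(θ * b))) ω ∂μ := by
        rw [integral_indicator_const _ (ℱ.le t _ hA), smul_eq_mul, mul_comm (μ.real A), mul_assoc]
    _ ≤ (θ ^ 2 / 4 * v - θ * δ) * ∫ ω, g ω ∂μ := by
        refine mul_le_mul_of_nonneg_left (integral_mono_ae ((integrable_const _).indicator
          (ℱ.le t _ hA)) ?_ (ae_of_all _ fun ω => ?_)) hκ
        · exact .of_bound (hg.mono (ℱ.le t)).aestronglyMeasurable 1 (by
            filter_upwards [hg1] with ω h using by rwa [Real.norm_of_nonneg (hg0 ω)])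
        by_cases hω : ω ∈ A
        · rw [indicator_of_mem hω, hg_def, indicator_of_mem hω]
          exact Real.exp_le_exp.2 (neg_le_neg (mul_le_mul_of_nonneg_left (hAX ω hω).2 hθ))
        · rw [indicator_of_notMem hω, hg_def, indicator_of_notMem hω]
    _ ≤ ∫ ω, g ω * (Real.exp (-(θ * (X (t + 1) ω - X t ω))) - 1) ∂μ :=
        mul_integral_le_integral_mul_exp_neg_sub_one (ℱ.le t) hg hg0 hg1
          ((hX.measurable.sub hX.measurable).aestronglyMeasurable) hjump hθ hθB
          (by filter_upwards [hdrift] with ω h hpos using h (hg_pos ω hpos))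
          (by filter_upwards [hvar] with ω h hpos using h (hg_pos ω hpos).1)
    _ = _ := by
        rw [← integral_sub (hX.integrable_stoppedProcess_exp hX0 hθ _)
          (hX.integrable_stoppedProcess_exp hX0 hθ _)]
        exact integral_congr_ae (ae_of_all _ fun ω => (hincrement ω).symm)

lemma MeasureTheory.Adapted.integral_stoppedProcess_exp_le [IsProbabilityMeasure μ]
    (hX : Adapted ℱ X)
    (hX0 : ∀ t ω, 0 ≤ X t ω) (hθ : 0 ≤ θ) (t : ℕ) :
    ∫ ω, stoppedProcess (fun t ω => Real.exp (-(θ * X t ω))) (exitTime X a b) t ω ∂μ ≤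
      μ.real (exitBelow X a b) + Real.exp (-(θ * b)) +
        μ.real {ω | (t : WithTop ℕ) < exitTime X a b ω} := by
  have hbelow := hX.measurableSet_exitBelow (a := a) (b := b)
  have hlt : MeasurableSet {ω | (t : WithTop ℕ) < exitTime X a b ω} :=
    ℱ.le t _ (hX.isStoppingTime_exitTime.measurableSet_gt t)
  calc _ ≤ ∫ ω, (exitBelow X a b).indicator 1 ω + Real.exp (-(θ * b)) +
        {ω | (t : WithTop ℕ) < exitTime X a b ω}.indicator 1 ω ∂μ :=
        integral_mono (hX.integrable_stoppedProcess_exp hX0 hθ t)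
          ((((integrable_const 1).indicator hbelow).add (integrable_const _)).add
            ((integrable_const 1).indicator hlt))
          (stoppedProcess_exp_le_indicator hX0 hθ t)
    _ = _ := by
        rw [integral_add (((integrable_const 1).indicator hbelow).add (integrable_const _))
          ((integrable_const 1).indicator hlt), integral_add ((integrable_const 1).indicator hbelow)
          (integrable_const _), integral_indicator_one hbelow, integral_indicator_one hlt,
          integral_const, probReal_univ, one_smul]

lemma MeasureTheory.Adapted.exit_ae_and_sub_le_measureReal_exitBelow [IsProbabilityMeasure μ]
    (hX : Adapted ℱ X)
    (hX0 : ∀ t ω, 0 ≤ X t ω) {B δ v x₀ : ℝ} (hθ : 0 ≤ θ) (hθB : θ * B ≤ 2)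
    (hjump : ∀ t : ℕ, ∀ᵐ ω ∂μ, |X (t + 1) ω - X t ω| ≤ B)
    (hvar : ∀ t : ℕ, ∀ᵐ ω ∂μ, a ≤ X t ω → v ≤ μ[fun ω' => (X (t + 1) ω' - X t ω') ^ 2|ℱ t] ω)
    (hdrift : ∀ t : ℕ, ∀ᵐ ω ∂μ, a ≤ X t ω ∧ X t ω ≤ b →
      μ[fun ω' => X (t + 1) ω' - X t ω'|ℱ t] ω ≤ δ)
    (hκ : 0 < θ ^ 2 / 4 * v - θ * δ) (hX_init : ∀ ω, X 0 ω ≤ x₀) :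
    (∀ᵐ ω ∂μ, ∃ t, X t ω < a ∨ b < X t ω) ∧
      Real.exp (-(θ * x₀)) - Real.exp (-(θ * b)) ≤ μ.real (exitBelow X a b) := by
  set z := fun t =>
    ∫ ω, stoppedProcess (fun t ω => Real.exp (-(θ * X t ω))) (exitTime X a b) t ω ∂μ
  set p := fun t : ℕ => μ.real {ω | (t : WithTop ℕ) < exitTime X a b ω}
  have hstep (t : ℕ) : (θ ^ 2 / 4 * v - θ * δ) * Real.exp (-(θ * b)) * p t ≤ z (t + 1) - z t :=
    hX.le_integral_stoppedProcess_exp_succ_sub hX0 hθ hθB t (hjump t) (hvar t) (hdrift t) hκ.le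
  have hz_le (t : ℕ) := hX.integral_stoppedProcess_exp_le hX0 hθ (μ := μ) (a := a) (b := b) t
  have hp : Tendsto p atTop (𝓝 0) :=
    tendsto_atTop_zero_of_mul_le_sub (C := μ.real (exitBelow X a b) + Real.exp (-(θ * b)) + 1)
      (by positivity) (fun _ => measureReal_nonneg) hstep
      fun t => (hz_le t).trans (by gcongr; exact measureReal_le_one)
  have hz_mono : Monotone z := monotone_nat_of_le_succ fun t => sub_nonneg.1 <|
    (mul_nonneg (mul_nonneg hκ.le (Real.exp_pos _).le) measureReal_nonneg).trans (hstep t)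
  have hz0 : Real.exp (-(θ * x₀)) ≤ z 0 := by
    calc Real.exp (-(θ * x₀)) = ∫ _, Real.exp (-(θ * x₀)) ∂μ := by simp
      _ ≤ z 0 := integral_mono (integrable_const _)
        (hX.integrable_stoppedProcess_exp hX0 hθ 0) fun ω => ?_
    rw [stoppedProcess_eq_of_le (i := 0) bot_le]
    exact Real.exp_le_exp.2 (neg_le_neg (mul_le_mul_of_nonneg_left (hX_init ω) hθ))
  constructor
  · have hnever : μ.real {ω | ¬∃ t, X t ω < a ∨ b < X t ω} = 0 := by
      refine le_antisymm (ge_of_tendsto' hp fun t => measureReal_mono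
        fun ω hω => lt_exitTime_iff.2 fun s _ => ?_) measureReal_nonneg
      push Not at hω
      exact hω s
    exact ae_iff.2 ((measureReal_eq_zero_iff).1 hnever)
  · have := ge_of_tendsto' hp fun t => show Real.exp (-(θ * x₀)) - Real.exp (-(θ * b)) -
        μ.real (exitBelow X a b) ≤ p t by linarith [hz_le t, hz_mono (Nat.zero_le t)]
    linarith

end StoppedExp

theorem stmt_8_general {Ω : Type*} {m0 : MeasurableSpace Ω} (μ : Measure Ω) [IsProbabilityMeasure μ]
    (a c B₁ B₂ γ : ℝ) (hc : 0 < c) (hB₂ : 0 < B₂)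
    (hγ : γ ∈ Set.Ioo (0 : ℝ) 1) :
    ∃ ν > (0 : ℝ), ∃ n₀ : ℝ, ∀ n : ℝ, n₀ ≤ n →
      ∀ (ℱ : Filtration ℕ m0) (X : ℕ → Ω → ℝ),
        Adapted ℱ X →
        (∀ t ω, 0 ≤ X t ω) →
        (∀ t : ℕ, ∀ᵐ ω ∂μ, |X (t + 1) ω - X t ω| ≤ B₁) →
        (∀ t : ℕ, ∀ᵐ ω ∂μ, a ≤ X t ω →
          B₂ ≤ (μ[(fun ω' => (X (t + 1) ω' - X t ω') ^ 2)|ℱ t]) ω) →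
        (∀ ω, a < X 0 ω ∧ X 0 ω ≤ γ * n) →
        (∀ t : ℕ, ∀ᵐ ω ∂μ, a ≤ X t ω ∧ X t ω ≤ n →
          (μ[(fun ω' => X (t + 1) ω' - X t ω')|ℱ t]) ω ≤ c / n) →
        (∀ᵐ ω ∂μ, ∃ t : ℕ, X t ω < a ∨ n < X t ω) ∧
        ENNReal.ofReal ν ≤ μ {ω | X (sInf {t : ℕ | X t ω < a ∨ n < X t ω}) ω < a} := by
  obtain ⟨hγ0, hγ1⟩ := hγ
  set β := 8 * c / B₂ with hβ_def
  have hβ : 0 < β := by positivity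
  refine ⟨Real.exp (-(β * γ)) - Real.exp (-β), sub_pos.2 (Real.exp_lt_exp.2 (by nlinarith)),
    max 1 (β * B₁ / 2), fun n hn ℱ X hX hX0 hjump hvar hX_init hdrift => ?_⟩
  have hn : 0 < n := one_pos.trans_le ((le_max_left _ _).trans hn)
  have hθB : β / n * B₁ ≤ 2 := by
    rw [div_mul_eq_mul_div, div_le_iff₀ hn]
    linarith [le_max_right 1 (β * B₁ / 2)]
  have hκ : (β / n) ^ 2 / 4 * B₂ - β / n * (c / n) = β * c / n ^ 2 := by
    rw [hβ_def]
    field_simp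
    ring
  obtain ⟨hexit, hbelow⟩ := hX.exit_ae_and_sub_le_measureReal_exitBelow hX0 (by positivity) hθB
    hjump hvar hdrift (hκ ▸ by positivity) fun ω => (hX_init ω).2
  refine ⟨hexit, ?_⟩
  rw [show β / n * (γ * n) = β * γ by field_simp, div_mul_cancel₀ β hn.ne'] at hbelow
  calc ENNReal.ofReal (Real.exp (-(β * γ)) - Real.exp (-β))
      ≤ μ (exitBelow X a n) := (ENNReal.ofReal_le_ofReal hbelow).trans_eq ofReal_measureReal
    _ ≤ _ := measure_mono fun ω ⟨t, ht, hlow⟩ => by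
      show X _ ω < a
      rwa [sInf_exit_eq_of_exitTime_eq ht]

/-- Lemma 3 of the paper: for a process on `[0,∞)` with bounded jumps, uniformly
non-degenerate conditional variance, started in `(a, γn]` and with drift at most `c/n`
on `[a,n]`, the exit time `τ` of `[a,n]` is a.s. finite and the exit is through the
bottom with probability at least `ν = ν(γ, c, B₂) > 0`, uniformly in (large) `n`. -/
theorem stmt_8 {Ω : Type*} {m0 : MeasurableSpace Ω} (μ : Measure Ω) [IsProbabilityMeasure μ]
    (a c B₁ B₂ γ : ℝ) (ha : 0 < a) (hc : 0 < c) (hB₁ : 0 < B₁) (hB₂ : 0 < B₂)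
    (hγ : γ ∈ Set.Ioo (0 : ℝ) 1) :
    ∃ ν > (0 : ℝ), ∃ n₀ : ℝ, ∀ n : ℝ, n₀ ≤ n →
      ∀ (ℱ : Filtration ℕ m0) (X : ℕ → Ω → ℝ),
        Adapted ℱ X →
        (∀ t ω, 0 ≤ X t ω) →
        (∀ t : ℕ, ∀ᵐ ω ∂μ, |X (t + 1) ω - X t ω| ≤ B₁) →
        (∀ t : ℕ, ∀ᵐ ω ∂μ, a ≤ X t ω →
          B₂ ≤ (μ[(fun ω' => (X (t + 1) ω' - X t ω') ^ 2)|ℱ t]) ω) →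
        (∀ ω, a < X 0 ω ∧ X 0 ω ≤ γ * n) →
        (∀ t : ℕ, ∀ᵐ ω ∂μ, a ≤ X t ω ∧ X t ω ≤ n →
          (μ[(fun ω' => X (t + 1) ω' - X t ω')|ℱ t]) ω ≤ c / n) →
        (∀ᵐ ω ∂μ, ∃ t : ℕ, X t ω < a ∨ n < X t ω) ∧
        ENNReal.ofReal ν ≤ μ {ω | X (sInf {t : ℕ | X t ω < a ∨ n < X t ω}) ω < a} :=
  stmt_8_general μ a c B₁ B₂ γ hc hB₂ hγ
end

section
/- Let x > 0 be large, δ ∈ (0,1), and y > x^{(2-δ)/(2-2δ)}. Then (y - x)^{2-δ} - x^{2-δ} ≥ x^{2 + δ²/(2-2δ)}·(1 + o(1)) as x → ∞; in particular (y-x)^{2-δ} - x^{2-δ} / x² → ∞. -/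
open Filter Topology

/-!
Put `α = (2-δ)/(2-2δ) > 1` and `p = 2-δ`, so that `α p = 2 + δ²/(2-2δ)`. Since `y ≥ x^α` and
`t ↦ t^p` is monotone, `(y-x)^p - x^p ≥ (x^α - x)^p - x^p = x^{αp} ((1 - x^{1-α})^p - x^{p-αp})`,
and the bracket tends to `1` because both `1-α` and `p - αp` are negative. As `αp > 2`, the lower
bound still dominates `x²`.
-/

/-- The relative error `e` in `(x^α - x)^p - x^p = x^{αp} (1 + e x)`. -/
noncomputable def powGapError (α p x : ℝ) : ℝ :=
  (1 - x ^ (1 - α)) ^ p - x ^ (p - α * p) - 1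

section PowGap

variable {α p : ℝ}

theorem tendsto_powGapError (hα : 1 < α) (hp : 0 < p) :
    Tendsto (powGapError α p) atTop (𝓝 0) := by
  have h_inner : Tendsto (fun x : ℝ => x ^ (1 - α)) atTop (𝓝 0) := by
    simpa [neg_sub] using tendsto_rpow_neg_atTop (y := α - 1) (by linarith)
  have h_outer : Tendsto (fun x : ℝ => x ^ (p - α * p)) atTop (𝓝 0) := by
    simpa [neg_sub] using tendsto_rpow_neg_atTop (y := α * p - p) (by nlinarith)
  have h_main : Tendsto (fun x : ℝ => (1 - x ^ (1 - α)) ^ p) atTop (𝓝 1) := by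
    have := ((tendsto_const_nhds (x := (1 : ℝ))).sub h_inner).rpow_const (p := p) (Or.inr hp.le)
    simpa using this
  unfold powGapError
  simpa using (h_main.sub h_outer).sub_const 1

theorem rpow_sub_self_rpow {x : ℝ} (hx : 1 ≤ x) (hα : 1 ≤ α) :
    (x ^ α - x) ^ p = x ^ (α * p) * (1 - x ^ (1 - α)) ^ p := by
  have hx0 : 0 < x := by linarith
  have h_small : x ^ (1 - α) ≤ 1 := Real.rpow_le_one_of_one_le_of_nonpos hx (by linarith)
  have h_factor : x ^ α - x = x ^ α * (1 - x ^ (1 - α)) := by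
    rw [mul_sub, mul_one, ← Real.rpow_add hx0, add_sub_cancel, Real.rpow_one]
  rw [h_factor, Real.mul_rpow (by positivity) (by linarith), Real.rpow_mul hx0.le]

theorem rpow_mul_one_add_powGapError_le {x z : ℝ} (hα : 1 ≤ α) (hp : 0 ≤ p) (hx : 1 ≤ x)
    (hz : x ^ α ≤ z) :
    x ^ (α * p) * (1 + powGapError α p x) ≤ (z - x) ^ p - x ^ p := by
  have hx0 : 0 < x := by linarith
  have h_gap : x ≤ x ^ α := by simpa using Real.rpow_le_rpow_of_exponent_le hx hα
  have h_identity : x ^ (α * p) * (1 + powGapError α p x) = (x ^ α - x) ^ p - x ^ p := by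
    rw [rpow_sub_self_rpow hx hα, powGapError, mul_add, mul_sub, mul_sub,
      ← Real.rpow_add hx0, add_sub_cancel (α * p) p]
    ring
  rw [h_identity]
  gcongr

end PowGap

theorem tendsto_div_rpow_atTop_of_rpow_mul_le {f e : ℝ → ℝ} {β γ : ℝ} (hγβ : γ < β)
    (he : Tendsto e atTop (𝓝 0)) (hf : ∀ᶠ x in atTop, x ^ β * (1 + e x) ≤ f x) :
    Tendsto (fun x => f x / x ^ γ) atTop atTop := by
  have h_lower : Tendsto (fun x => x ^ (β - γ) * (1 + e x)) atTop atTop :=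
    (tendsto_rpow_atTop (by linarith)).atTop_mul_pos one_pos (by simpa using he.const_add 1)
  refine tendsto_atTop_mono' atTop ?_ h_lower
  filter_upwards [hf, eventually_gt_atTop 0] with x hfx hx
  rw [le_div_iff₀ (by positivity), mul_right_comm, ← Real.rpow_add hx, sub_add_cancel]
  exact hfx

/-- For `δ ∈ (0,1)` and `y = y(x) > x^{(2-δ)/(2-2δ)}`, one has
`(y - x)^{2-δ} - x^{2-δ} ≥ x^{2 + δ²/(2-2δ)}·(1 + o(1))` as `x → ∞`; in particular
`((y-x)^{2-δ} - x^{2-δ})/x² → ∞`. -/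
theorem stmt_18 (δ : ℝ) (hδ : δ ∈ Set.Ioo (0 : ℝ) 1)
    (y : ℝ → ℝ) (hy : ∀ x : ℝ, 0 < x → x ^ ((2 - δ) / (2 - 2 * δ)) < y x) :
    (∃ e : ℝ → ℝ, Tendsto e atTop (nhds 0) ∧
      ∀ᶠ x in atTop,
        (y x - x) ^ (2 - δ) - x ^ (2 - δ) ≥ x ^ (2 + δ ^ 2 / (2 - 2 * δ)) * (1 + e x)) ∧
    Tendsto (fun x => ((y x - x) ^ (2 - δ) - x ^ (2 - δ)) / x ^ 2) atTop atTop := by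
  obtain ⟨hδ0, hδ1⟩ := hδ
  have h_denom : 0 < 2 - 2 * δ := by linarith
  have hα : 1 < (2 - δ) / (2 - 2 * δ) := by rw [lt_div_iff₀ h_denom]; linarith
  have h_exponent : (2 - δ) / (2 - 2 * δ) * (2 - δ) = 2 + δ ^ 2 / (2 - 2 * δ) := by
    field_simp; ring
  have h_two_lt : (2 : ℝ) < 2 + δ ^ 2 / (2 - 2 * δ) := by
    have : 0 < δ ^ 2 / (2 - 2 * δ) := by positivity
    linarith
  have h_bound : ∀ᶠ x in atTop, x ^ (2 + δ ^ 2 / (2 - 2 * δ)) *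
      (1 + powGapError ((2 - δ) / (2 - 2 * δ)) (2 - δ) x) ≤ (y x - x) ^ (2 - δ) - x ^ (2 - δ) := by
    filter_upwards [eventually_ge_atTop 1] with x hx
    rw [← h_exponent]
    exact rpow_mul_one_add_powGapError_le hα.le (by linarith) hx (hy x (by linarith)).le
  refine ⟨⟨_, tendsto_powGapError hα (by linarith), h_bound⟩, ?_⟩
  simpa [Real.rpow_two] using tendsto_div_rpow_atTop_of_rpow_mul_le h_two_lt
    (tendsto_powGapError hα (by linarith)) h_bound
end
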